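/- Let A ⊆ ℤⁿ be generic and let B ⊆ A be strongly neighborly in A. Then every nonempty subset of B is strongly neighborly in A (i.e., the collection N(A) of strongly neighborly subsets of A forms a simplicial complex). -/

import Mathlib

/-- `Dom α β` means `α ≪ β`: componentwise strict domination. -/
def Dom {n : ℕ} (α β : Fin n → ℤ) : Prop := ∀ i, α i < β i

/-- `vee B` is the componentwise maximum `∨B` of a finite set `B ⊆ ℤⁿ`
(junk value `0` in a component if `B` is empty). -/
def vee {n : ℕ} (B : Finset (Fin n → ℤ)) : Fin n → ℤ :=
  fun i => ((B.image fun α => α i).max).unbotD 0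

/-- `B` is neighborly in `A`: `B` is a nonempty finite subset of `A` and
no `α ∈ A` satisfies `α ≪ ∨B`. -/
def Neighborly {n : ℕ} (A : Set (Fin n → ℤ)) (B : Finset (Fin n → ℤ)) : Prop :=
  B.Nonempty ∧ ↑B ⊆ A ∧ ∀ α ∈ A, ¬ Dom α (vee B)


/-- `B` is strongly neighborly in `A`: `B` is a nonempty finite subset of `A` and
every nonempty finite `B' ⊆ A` with `∨B' = ∨B` equals `B`. -/
def StronglyNeighborly {n : ℕ} (A : Set (Fin n → ℤ)) (B : Finset (Fin n → ℤ)) : Prop :=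
  B.Nonempty ∧ ↑B ⊆ A ∧
    ∀ B' : Finset (Fin n → ℤ), B'.Nonempty → ↑B' ⊆ A → vee B' = vee B → B' = B


/-- `A ⊆ ℤⁿ` is generic: for every `η ∈ ℤⁿ` such that no `α ∈ A` satisfies `α ≪ η`,
and every coordinate `i`, at most one `α ∈ A` has `α ≤ η` and `α i = η i`. -/
def Generic {n : ℕ} (A : Set (Fin n → ℤ)) : Prop :=
  ∀ η : Fin n → ℤ, (∀ α ∈ A, ¬ Dom α η) →
    ∀ i : Fin n, ∀ α ∈ A, ∀ β ∈ A,
      α ≤ η → α i = η i → β ≤ η → β i = η i → α = β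


/-!
Let `B' ⊆ B` and let `C ⊆ A` have `∨C = ∨B'`. Then `C ∪ (B \ B')` has the same join as `B`,
so it equals `B`; hence `B' ⊆ C ⊆ B`. An extra element `β ∈ C \ B'` is not redundant in `B`, so it
attains `∨B` in some coordinate `i`; since `β i ≤ ∨B' i ≤ ∨B i`, an element of `B'` attains it
too, and genericity at `η = ∨B` (which is legitimate because strongly neighborly sets are
neighborly) identifies the two.
-/

namespace Finset

variable {n : ℕ} {B C : Finset (Fin n → ℤ)} {β : Fin n → ℤ}

theorem vee_eq_sup' (hB : B.Nonempty) : vee B = B.sup' hB id := by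
  funext i
  have hBi : (B.image fun α => α i).Nonempty := hB.image _
  rw [Finset.sup'_apply, vee, ← coe_max' hBi, max'_eq_sup', sup'_image]
  rfl

theorem le_vee (hβ : β ∈ B) : β ≤ vee B := by
  rw [vee_eq_sup' ⟨β, hβ⟩]
  exact le_sup' id hβ

theorem vee_le {η : Fin n → ℤ} (hB : B.Nonempty) (h : ∀ β ∈ B, β ≤ η) : vee B ≤ η := by
  rw [vee_eq_sup' hB]
  exact sup'_le hB id h

theorem vee_mono (hB : B.Nonempty) (hBC : B ⊆ C) : vee B ≤ vee C :=
  vee_le hB fun _ hβ => le_vee (hBC hβ)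

theorem exists_apply_eq_vee (hB : B.Nonempty) (i : Fin n) : ∃ β ∈ B, β i = vee B i := by
  rw [vee_eq_sup' hB, Finset.sup'_apply]
  obtain ⟨β, hβ, hmax⟩ := exists_mem_eq_sup' hB fun β : Fin n → ℤ => β i
  exact ⟨β, hβ, hmax.symm⟩

end Finset

open Finset

namespace StronglyNeighborly

variable {n : ℕ} {A : Set (Fin n → ℤ)} {B : Finset (Fin n → ℤ)} {β : Fin n → ℤ}

/-- An element that nowhere attains `∨B` could be dropped from `B` without changing `∨B`. -/
theorem exists_apply_eq_vee (hB : StronglyNeighborly A B) (hβ : β ∈ B)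
    (hne : (B.erase β).Nonempty) : ∃ i, β i = vee B i := by
  by_contra! hlt
  have hvee : vee (B.erase β) = vee B := by
    refine le_antisymm (vee_mono hne (erase_subset β B)) (vee_le hB.1 fun γ hγ i => ?_)
    obtain ⟨δ, hδ, hδi⟩ := Finset.exists_apply_eq_vee hB.1 i
    have hδβ : δ ≠ β := by rintro rfl; exact hlt i hδi
    calc γ i ≤ vee B i := le_vee hγ i
      _ = δ i := hδi.symm
      _ ≤ vee (B.erase β) i := le_vee (mem_erase.mpr ⟨hδβ, hδ⟩) i
  have hEq := hB.2.2 _ hne (fun _ h => hB.2.1 (mem_of_mem_erase h)) hvee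
  exact notMem_erase β B (by rwa [hEq])

theorem neighborly (hB : StronglyNeighborly A B) (hn : 0 < n) : Neighborly A B := by
  refine ⟨hB.1, hB.2.1, fun α hα hdom => ?_⟩
  have hαB : α ∈ B := by
    have hvee : vee (insert α B) = vee B :=
      le_antisymm
        (vee_le (insert_nonempty α B) fun γ hγ => by
          rcases mem_insert.mp hγ with rfl | hγ
          exacts [fun i => (hdom i).le, le_vee hγ])
        (vee_mono hB.1 (subset_insert α B))
    have hEq := hB.2.2 _ (insert_nonempty α B)
      (by simpa [Set.insert_subset_iff] using ⟨hα, hB.2.1⟩) hvee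
    exact hEq ▸ mem_insert_self α B
  obtain ⟨γ, hγ, hγi⟩ := Finset.exists_apply_eq_vee hB.1 ⟨0, hn⟩
  have hγα : γ ≠ α := by rintro rfl; exact (hdom _).ne hγi
  obtain ⟨i, hi⟩ := hB.exists_apply_eq_vee hαB ⟨γ, mem_erase.mpr ⟨hγα, hγ⟩⟩
  exact (hdom i).ne hi

theorem union_sdiff_eq (hB : StronglyNeighborly A B) {B' C : Finset (Fin n → ℤ)}
    (hB' : B'.Nonempty) (hsub : B' ⊆ B) (hC : C.Nonempty) (hCA : ↑C ⊆ A)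
    (hvee : vee C = vee B') : C ∪ (B \ B') = B := by
  refine hB.2.2 _ (hC.mono subset_union_left) ?_ (le_antisymm ?_ ?_)
  · rw [coe_union]
    exact Set.union_subset hCA ((coe_subset.mpr sdiff_subset).trans hB.2.1)
  · refine vee_le (hC.mono subset_union_left) fun γ hγ => ?_
    rcases mem_union.mp hγ with hγ | hγ
    · exact (le_vee hγ).trans (hvee ▸ vee_mono hB' hsub)
    · exact le_vee (mem_sdiff.mp hγ).1
  · refine vee_le hB.1 fun γ hγ => ?_
    by_cases hγB' : γ ∈ B'
    · exact (le_vee hγB').trans (hvee ▸ vee_mono hC subset_union_left)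
    · exact le_vee (mem_union_right _ (mem_sdiff.mpr ⟨hγ, hγB'⟩))

end StronglyNeighborly

theorem stmt3 {n : ℕ} (A : Set (Fin n → ℤ)) (hA : Generic A)
    (B : Finset (Fin n → ℤ)) (hB : StronglyNeighborly A B)
    (B' : Finset (Fin n → ℤ)) (hB'ne : B'.Nonempty) (hsub : B' ⊆ B) :
    StronglyNeighborly A B' := by
  refine ⟨hB'ne, fun _ h => hB.2.1 (hsub h), fun C hC hCA hvee => ?_⟩
  have hCB' := hB.union_sdiff_eq hB'ne hsub hC hCA hvee
  have hCB : C ⊆ B := hCB' ▸ subset_union_left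
  have hB'C : B' ⊆ C := fun β hβ => by
    rcases mem_union.mp (hCB'.symm ▸ hsub hβ : β ∈ C ∪ (B \ B')) with h | h
    exacts [h, absurd hβ (mem_sdiff.mp h).2]
  refine Subset.antisymm (fun β hβC => ?_) hB'C
  by_contra hβB'
  obtain ⟨i, hi⟩ := hB.exists_apply_eq_vee (hCB hβC) (hB'ne.mono (subset_erase.mpr ⟨hsub, hβB'⟩))
  obtain ⟨γ, hγ, hγi⟩ := exists_apply_eq_vee hB'ne i
  have hγmax : γ i = vee B i :=
    le_antisymm (hγi ▸ vee_mono hB'ne hsub i) (hi ▸ hγi ▸ hvee ▸ le_vee hβC i)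
  have hβγ : β = γ := hA (vee B) (hB.neighborly i.pos).2.2 i β (hCA hβC) γ (hB.2.1 (hsub hγ))
    (le_vee (hCB hβC)) hi (le_vee (hsub hγ)) hγmax
  exact hβB' (hβγ ▸ hγ)
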